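/- Let (ā, b) be an independent tuple in a Steiner quasigroup, let r(x̄, y) be a reduced term with at least two occurrences of y, and let c = r(ā, b). Then the homomorphism f : ⟨ā, b⟩ → ⟨ā, c⟩ induced by ā ↦ ā, b ↦ c is an isomorphism onto ⟨ā, c⟩, and b ∉ ⟨ā, c⟩. -/

import Mathlib

/-- A Steiner quasigroup: a commutative, idempotent binary structure
with `x * (x * y) = y`. -/
class Steiner (M : Type) extends Mul M where
  comm : ∀ x y : M, x * y = y * x
  idem : ∀ x : M, x * x = x
  lcancel : ∀ x y : M, x * (x * y) = y

namespace Steiner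

variable {M : Type} [Steiner M]

/-- Membership in the subquasigroup generated by `A`. -/
inductive mem_closure (A : Set M) : M → Prop
  | base {a : M} : a ∈ A → mem_closure A a
  | mul {a b : M} : mem_closure A a → mem_closure A b → mem_closure A (a * b)

/-- The subquasigroup generated by `A`. -/
def closure (A : Set M) : Set M := {x | mem_closure A x}

instance (A : Set M) : Steiner (closure A) where
  mul a b := ⟨a.1 * b.1, a.2.mul b.2⟩
  comm a b := Subtype.ext (Steiner.comm a.1 b.1)
  idem a := Subtype.ext (Steiner.idem a.1)
  lcancel a b := Subtype.ext (Steiner.lcancel a.1 b.1)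

/-- `A` is independent: the generated subquasigroup has the universal mapping
property over `A` with respect to the class of Steiner quasigroups. -/
def Independent (A : Set M) : Prop :=
  ∀ (N : Type) [Steiner N] (f : A → N),
    ∃ g : closure A →ₙ* N, ∀ a : A, g ⟨a.1, mem_closure.base a.2⟩ = f a

/-- A tuple is independent if its entries are pairwise distinct and its
range is an independent set. -/
def IndepTuple {ι : Type} (a : ι → M) : Prop :=
  Function.Injective a ∧ Independent (Set.range a)

/-- `A` is a free base of `M`: it generates `M` and `M` has the universal
mapping property over `A`. -/
def FreeBase (A : Set M) : Prop :=
  closure A = Set.univ ∧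
  ∀ (N : Type) [Steiner N] (f : A → N),
    ∃ g : M →ₙ* N, ∀ a : A, g a.1 = f a

/-- Terms in the language with one binary operation. -/
inductive Term (α : Type) where
  | var : α → Term α
  | mul : Term α → Term α → Term α

/-- Evaluation of a term at an assignment. -/
def Term.eval {α : Type} (e : α → M) : Term α → M
  | .var x => e x
  | .mul t s => t.eval e * s.eval e

/-- Equivalence of terms generated by applications of commutativity to subterms. -/
inductive TEquiv {α : Type} : Term α → Term α → Prop
  | refl (t : Term α) : TEquiv t t
  | symm {t s : Term α} : TEquiv t s → TEquiv s t
  | trans {t s u : Term α} : TEquiv t s → TEquiv s u → TEquiv t u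
  | comm (t s : Term α) : TEquiv (.mul t s) (.mul s t)
  | congr {t t' s s' : Term α} : TEquiv t t' → TEquiv s s' →
      TEquiv (.mul t s) (.mul t' s')

/-- The subterm relation. -/
inductive Subterm {α : Type} : Term α → Term α → Prop
  | refl (t : Term α) : Subterm t t
  | left {s t r : Term α} : Subterm s t → Subterm s (.mul t r)
  | right {s t r : Term α} : Subterm s t → Subterm s (.mul r t)

/-- A term is reduced if it contains no subterm of the forms `t₁·t₂` with
`t₁ ∼ t₂`, `t₁·(t₂·t₃)` with `t₁ ∼ t₂` or `t₁ ∼ t₃`, or `(t₁·t₂)·t₃` with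
`t₁ ∼ t₃` or `t₂ ∼ t₃`. -/
def Reduced {α : Type} (t : Term α) : Prop :=
  (∀ t1 t2 : Term α, Subterm (.mul t1 t2) t → ¬ TEquiv t1 t2) ∧
  (∀ t1 t2 t3 : Term α, Subterm (.mul t1 (.mul t2 t3)) t →
      ¬ TEquiv t1 t2 ∧ ¬ TEquiv t1 t3) ∧
  (∀ t1 t2 t3 : Term α, Subterm (.mul (.mul t1 t2) t3) t →
      ¬ TEquiv t1 t3 ∧ ¬ TEquiv t2 t3)

/-- The rank of a term. -/
def Term.rank {α : Type} : Term α → ℕ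
  | .var _ => 0
  | .mul t s => max t.rank s.rank + 1

/-- Number of occurrences of a variable in a term. -/
def Term.occ {α : Type} [DecidableEq α] (x : α) : Term α → ℕ
  | .var y => if y = x then 1 else 0
  | .mul t s => t.occ x + s.occ x

/-- The variable `x` occurs in the term. -/
inductive Occurs {α : Type} (x : α) : Term α → Prop
  | var : Occurs x (.var x)
  | left {t s : Term α} : Occurs x t → Occurs x (.mul t s)
  | right {t s : Term α} : Occurs x s → Occurs x (.mul t s)

/-- The levels of `M` over `A`. -/
def level (A : Set M) : ℕ → Set M
  | 0 => A
  | n + 1 => {z | ∃ a ∈ level A n, ∃ b ∈ level A n, z = a * b}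

/-- `S` is a standard free construction over `A`. -/
def StdFree (A : Set M) (S : ℕ → Set M) : Prop :=
  S 0 = A ∧
  (∀ n, S (n + 1) = {z | ∃ a ∈ S n, ∃ b ∈ S n, z = a * b}) ∧
  (∀ a ∈ S 0, ∀ b ∈ S 0, a ≠ b → a * b ∉ S 0) ∧
  (∀ n, ∀ a ∈ S (n + 1), a ∉ S n → ∀ b ∈ S (n + 1), b ∉ S n → a ≠ b →
    a * b ∉ S (n + 1)) ∧
  (∀ n, ∀ a ∈ S (n + 1), a ∉ S n → ∃ b ∈ S n, ∃ c ∈ S n, b ≠ c ∧ a = b * c ∧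
    ∀ b' ∈ S n, ∀ c' ∈ S n, b' ≠ c' → a = b' * c' → ({b', c'} : Set M) = {b, c})

theorem eval_mem_closure {α : Type} {A : Set M} (e : α → M) (h : ∀ x, e x ∈ A) :
    ∀ t : Term α, t.eval e ∈ closure A
  | .var x => mem_closure.base (h x)
  | .mul t s => mem_closure.mul (eval_mem_closure e h t) (eval_mem_closure e h s)

end Steiner

open Steiner

namespace Aux19
open Steiner

variable {α : Type}

theorem tequiv_shape {t s : Term α} (h : TEquiv t s) :
    (∃ x, t = .var x ∧ s = .var x) ∨
    (∃ t₁ t₂ s₁ s₂, t = .mul t₁ t₂ ∧ s = .mul s₁ s₂ ∧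
      ((TEquiv t₁ s₁ ∧ TEquiv t₂ s₂) ∨ (TEquiv t₁ s₂ ∧ TEquiv t₂ s₁))) := by
  induction h with
  | refl t =>
    cases t with
    | var x => exact Or.inl ⟨x, rfl, rfl⟩
    | mul a b => exact Or.inr ⟨a, b, a, b, rfl, rfl, Or.inl ⟨.refl a, .refl b⟩⟩
  | symm h ih =>
    rcases ih with ⟨x, rfl, rfl⟩ | ⟨a, b, c, d, rfl, rfl, hh⟩
    · exact Or.inl ⟨x, rfl, rfl⟩
    · rcases hh with ⟨h1, h2⟩ | ⟨h1, h2⟩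
      · exact Or.inr ⟨c, d, a, b, rfl, rfl, Or.inl ⟨h1.symm, h2.symm⟩⟩
      · exact Or.inr ⟨c, d, a, b, rfl, rfl, Or.inr ⟨h2.symm, h1.symm⟩⟩
  | trans h1 h2 ih1 ih2 =>
    rcases ih1 with ⟨x, rfl, rfl⟩ | ⟨a, b, c, d, rfl, rfl, hh⟩
    · rcases ih2 with ⟨x', hx, rfl⟩ | ⟨a, b, c, d, hx, rfl, hh⟩
      · injection hx with h; subst h; exact Or.inl ⟨x, rfl, rfl⟩
      · exact absurd hx (by simp)
    · rcases ih2 with ⟨x', hx, rfl⟩ | ⟨a', b', c', d', hx, rfl, hh'⟩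
      · exact absurd hx (by simp)
      · injection hx with hx1 hx2
        subst hx1; subst hx2
        rcases hh with ⟨h1, h2⟩ | ⟨h1, h2⟩ <;> rcases hh' with ⟨h3, h4⟩ | ⟨h3, h4⟩
        · exact Or.inr ⟨a, b, c', d', rfl, rfl, Or.inl ⟨h1.trans h3, h2.trans h4⟩⟩
        · exact Or.inr ⟨a, b, c', d', rfl, rfl, Or.inr ⟨h1.trans h3, h2.trans h4⟩⟩
        · exact Or.inr ⟨a, b, c', d', rfl, rfl, Or.inr ⟨h1.trans h4, h2.trans h3⟩⟩
        · exact Or.inr ⟨a, b, c', d', rfl, rfl, Or.inl ⟨h1.trans h4, h2.trans h3⟩⟩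
  | comm t s => exact Or.inr ⟨t, s, s, t, rfl, rfl, Or.inr ⟨.refl t, .refl s⟩⟩
  | congr h1 h2 =>
    exact Or.inr ⟨_, _, _, _, rfl, rfl, Or.inl ⟨h1, h2⟩⟩

theorem tequiv_var {x : α} {s : Term α} (h : TEquiv (.var x) s) : s = .var x := by
  rcases tequiv_shape h with ⟨x', hx, rfl⟩ | ⟨a, b, c, d, hx, rfl, hh⟩
  · cases hx; rfl
  · exact absurd hx (by simp)

theorem tequiv_mul {t₁ t₂ s : Term α} (h : TEquiv (.mul t₁ t₂) s) :
    ∃ s₁ s₂, s = .mul s₁ s₂ ∧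
      ((TEquiv t₁ s₁ ∧ TEquiv t₂ s₂) ∨ (TEquiv t₁ s₂ ∧ TEquiv t₂ s₁)) := by
  rcases tequiv_shape h with ⟨x', hx, rfl⟩ | ⟨a, b, c, d, hx, rfl, hh⟩
  · exact absurd hx (by simp)
  · injection hx with h1 h2; subst h1; subst h2; exact ⟨c, d, rfl, hh⟩

theorem tequiv_rank {t s : Term α} (h : TEquiv t s) : t.rank = s.rank := by
  induction h with
  | refl t => rfl
  | symm h ih => exact ih.symm
  | trans h1 h2 ih1 ih2 => exact ih1.trans ih2
  | comm t s => simp [Term.rank, Nat.max_comm]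
  | congr h1 h2 ih1 ih2 => simp [Term.rank, ih1, ih2]

theorem tequiv_occ [DecidableEq α] (x : α) {t s : Term α} (h : TEquiv t s) :
    t.occ x = s.occ x := by
  induction h with
  | refl t => rfl
  | symm h ih => exact ih.symm
  | trans h1 h2 ih1 ih2 => exact ih1.trans ih2
  | comm t s => simp [Term.occ, Nat.add_comm]
  | congr h1 h2 ih1 ih2 => simp [Term.occ, ih1, ih2]

theorem subterm_trans {a b c : Term α} (h1 : Subterm a b) (h2 : Subterm b c) :
    Subterm a c := by
  induction h2 with
  | refl => exact h1
  | left h ih => exact .left ih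
  | right h ih => exact .right ih

theorem subterm_var {p : Term α} {x : α} (h : Subterm p (.var x)) : p = .var x := by
  cases h; rfl

theorem subterm_mul {p a b : Term α} (h : Subterm p (.mul a b)) :
    p = .mul a b ∨ Subterm p a ∨ Subterm p b := by
  cases h with
  | refl => exact Or.inl rfl
  | left h => exact Or.inr (Or.inl h)
  | right h => exact Or.inr (Or.inr h)

theorem reduced_of_subterm {t s : Term α} (ht : Reduced t) (h : Subterm s t) :
    Reduced s := by
  obtain ⟨h1, h2, h3⟩ := ht
  exact ⟨fun a b hs => h1 a b (subterm_trans hs h),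
    fun a b c hs => h2 a b c (subterm_trans hs h),
    fun a b c hs => h3 a b c (subterm_trans hs h)⟩

theorem reduced_var (x : α) : Reduced (Term.var x) := by
  refine ⟨fun a b hs => ?_, fun a b c hs => ?_, fun a b c hs => ?_⟩ <;>
    exact absurd (subterm_var hs) (by simp)

theorem reduced_mul_left {a b : Term α} (h : Reduced (.mul a b)) : Reduced a :=
  reduced_of_subterm h (.left (.refl a))

theorem reduced_mul_right {a b : Term α} (h : Reduced (.mul a b)) : Reduced b :=
  reduced_of_subterm h (.right (.refl b))

theorem reduced_mul_intro {a b : Term α} (ha : Reduced a) (hb : Reduced b)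
    (hab : ¬ TEquiv a b)
    (hbm : ∀ b₁ b₂, b = .mul b₁ b₂ → ¬ TEquiv a b₁ ∧ ¬ TEquiv a b₂)
    (ham : ∀ a₁ a₂, a = .mul a₁ a₂ → ¬ TEquiv a₁ b ∧ ¬ TEquiv a₂ b) :
    Reduced (.mul a b) := by
  refine ⟨fun t1 t2 hs => ?_, fun t1 t2 t3 hs => ?_, fun t1 t2 t3 hs => ?_⟩
  · rcases subterm_mul hs with heq | hs | hs
    · injection heq with e1 e2; subst e1; subst e2; exact hab
    · exact ha.1 _ _ hs
    · exact hb.1 _ _ hs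
  · rcases subterm_mul hs with heq | hs | hs
    · injection heq with e1 e2; subst e1; subst e2
      exact hbm _ _ rfl
    · exact ha.2.1 _ _ _ hs
    · exact hb.2.1 _ _ _ hs
  · rcases subterm_mul hs with heq | hs | hs
    · injection heq with e1 e2; subst e1; subst e2
      exact ham _ _ rfl
    · exact ha.2.2 _ _ _ hs
    · exact hb.2.2 _ _ _ hs

end Aux19

namespace Aux19
open Steiner

variable {α : Type}

/-- The Steiner congruence on terms. -/
inductive SEq {α : Type} : Term α → Term α → Prop
  | refl (t : Term α) : SEq t t
  | symm {t s : Term α} : SEq t s → SEq s t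
  | trans {t s u : Term α} : SEq t s → SEq s u → SEq t u
  | comm (t s : Term α) : SEq (.mul t s) (.mul s t)
  | congr {t t' s s' : Term α} : SEq t t' → SEq s s' → SEq (.mul t s) (.mul t' s')
  | idem (t : Term α) : SEq (.mul t t) t
  | lcancel (t s : Term α) : SEq (.mul t (.mul t s)) s

theorem seq_of_tequiv {t s : Term α} (h : TEquiv t s) : SEq t s := by
  induction h with
  | refl t => exact .refl t
  | symm h ih => exact ih.symm
  | trans h1 h2 ih1 ih2 => exact ih1.trans ih2
  | comm t s => exact .comm t s
  | congr h1 h2 ih1 ih2 => exact .congr ih1 ih2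

theorem seq_eval {M : Type} [Steiner M] (e : α → M) {t s : Term α} (h : SEq t s) :
    t.eval e = s.eval e := by
  induction h with
  | refl t => rfl
  | symm h ih => exact ih.symm
  | trans h1 h2 ih1 ih2 => exact ih1.trans ih2
  | comm t s => exact Steiner.comm _ _
  | congr h1 h2 ih1 ih2 => simp only [Term.eval, ih1, ih2]
  | idem t => exact Steiner.idem _
  | lcancel t s => exact Steiner.lcancel _ _

variable {ι : Type}

/-- Substitution of `r` for the variable `none`. -/
def subst (r : Term (Option ι)) : Term (Option ι) → Term (Option ι)
  | .var none => r
  | .var (some i) => .var (some i)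
  | .mul a b => .mul (subst r a) (subst r b)

theorem subst_subst (p r : Term (Option ι)) (t : Term (Option ι)) :
    subst p (subst r t) = subst (subst p r) t := by
  induction t with
  | var x => cases x <;> rfl
  | mul a b iha ihb => simp only [subst, iha, ihb]

theorem subst_var (t : Term (Option ι)) :
    subst (.var none) t = t := by
  induction t with
  | var x => cases x <;> rfl
  | mul a b iha ihb => simp only [subst, iha, ihb]

theorem occ_subst [DecidableEq ι] (r : Term (Option ι)) (t : Term (Option ι)) :
    (subst r t).occ none = t.occ none * r.occ none := by
  induction t with
  | var x =>
    cases x with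
    | none => simp [subst, Term.occ]
    | some i => simp [subst, Term.occ]
  | mul a b iha ihb => simp [subst, Term.occ, iha, ihb, Nat.add_mul]

theorem subst_of_occ_zero [DecidableEq ι] {t : Term (Option ι)}
    (h : t.occ none = 0) (r : Term (Option ι)) : subst r t = t := by
  induction t with
  | var x =>
    cases x with
    | none => simp [Term.occ] at h
    | some i => rfl
  | mul a b iha ihb =>
    simp only [Term.occ, Nat.add_eq_zero] at h
    simp only [subst, iha h.1, ihb h.2]

theorem seq_subst {t s : Term (Option ι)} (r : Term (Option ι)) (h : SEq t s) :
    SEq (subst r t) (subst r s) := by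
  induction h with
  | refl t => exact .refl _
  | symm h ih => exact ih.symm
  | trans h1 h2 ih1 ih2 => exact ih1.trans ih2
  | comm t s => exact .comm _ _
  | congr h1 h2 ih1 ih2 => exact .congr ih1 ih2
  | idem t => exact .idem _
  | lcancel t s => exact .lcancel _ _

theorem seq_subst_left {p q : Term (Option ι)} (h : SEq p q) (t : Term (Option ι)) :
    SEq (subst p t) (subst q t) := by
  induction t with
  | var x => cases x with
    | none => exact h
    | some i => exact .refl _
  | mul a b iha ihb => exact .congr iha ihb

/-- Injectivity of substitution modulo `TEquiv`, for `r = r₁ · r₂` with the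
variable `none` occurring in both factors. -/
theorem subst_inj_tequiv [DecidableEq ι] {r₁ r₂ : Term (Option ι)}
    (h1 : 1 ≤ r₁.occ none) (h2 : 1 ≤ r₂.occ none) :
    ∀ t s : Term (Option ι),
      TEquiv (subst (.mul r₁ r₂) t) (subst (.mul r₁ r₂) s) → TEquiv t s := by
  have hocc : ∀ u : Term (Option ι),
      TEquiv (subst (.mul r₁ r₂) u) r₁ ∨ TEquiv (subst (.mul r₁ r₂) u) r₂ → False := by
    intro u hu
    have hr : (Term.mul r₁ r₂).occ none = r₁.occ none + r₂.occ none := rfl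
    rcases hu with hu | hu <;>
    · have := tequiv_occ none hu
      rw [occ_subst] at this
      rcases Nat.eq_zero_or_pos (u.occ none) with h0 | h0
      · rw [h0, Nat.zero_mul] at this; omega
      · have : u.occ none * (Term.mul r₁ r₂).occ none ≥ (Term.mul r₁ r₂).occ none :=
          Nat.le_mul_of_pos_left _ h0
        omega
  intro t
  induction t with
  | var x =>
    cases x with
    | none =>
      intro s hs
      cases s with
      | var z =>
        cases z with
        | none => exact .refl _
        | some i =>
          have := tequiv_var hs.symm
          simp [subst] at this
      | mul s₁ s₂ =>
        exfalso
        obtain ⟨u₁, u₂, heq, hh⟩ := tequiv_mul (t₁ := r₁) (t₂ := r₂) (by exact hs)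
        simp only [subst] at heq
        injection heq with e1 e2; subst e1; subst e2
        rcases hh with ⟨ha, hb⟩ | ⟨ha, hb⟩
        · exact hocc s₁ (Or.inl ha.symm)
        · exact hocc s₂ (Or.inl ha.symm)
    | some i =>
      intro s hs
      have := tequiv_var hs
      cases s with
      | var z => cases z with
        | none => simp [subst] at this
        | some j =>
          simp only [subst] at this
          injection this with h
      | mul s₁ s₂ => simp [subst] at this
  | mul t₁ t₂ iht₁ iht₂ =>
    intro s hs
    cases s with
    | var z =>
      cases z with
      | none =>
        exfalso
        obtain ⟨u₁, u₂, heq, hh⟩ := tequiv_mul (by exact hs.symm)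
        simp only [subst] at heq
        injection heq with e1 e2; subst e1; subst e2
        rcases hh with ⟨ha, hb⟩ | ⟨ha, hb⟩
        · exact hocc t₁ (Or.inl ha.symm)
        · exact hocc t₂ (Or.inl ha.symm)
      | some i =>
        have := tequiv_var hs.symm
        simp [subst] at this
    | mul s₁ s₂ =>
      obtain ⟨u₁, u₂, heq, hh⟩ := tequiv_mul (by exact hs)
      simp only [subst] at heq
      injection heq with e1 e2; subst e1; subst e2
      rcases hh with ⟨ha, hb⟩ | ⟨ha, hb⟩
      · exact .congr (iht₁ _ ha) (iht₂ _ hb)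
      · exact (TEquiv.congr (iht₁ _ ha) (iht₂ _ hb)).trans (.comm s₂ s₁)

end Aux19

namespace Aux19
open Steiner

variable {ι : Type}

theorem subterm_subst {r : Term (Option ι)} :
    ∀ {t p : Term (Option ι)}, Subterm p (subst r t) →
      Subterm p r ∨ ∃ u, Subterm u t ∧ p = subst r u := by
  intro t
  induction t with
  | var x =>
    cases x with
    | none => intro p hp; exact Or.inl hp
    | some i =>
      intro p hp
      have := subterm_var hp
      exact Or.inr ⟨.var (some i), .refl _, this⟩
  | mul a b iha ihb =>
    intro p hp
    rcases subterm_mul hp with heq | hp | hp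
    · exact Or.inr ⟨.mul a b, .refl _, heq⟩
    · rcases iha hp with h | ⟨u, hu, rfl⟩
      · exact Or.inl h
      · exact Or.inr ⟨u, .left hu, rfl⟩
    · rcases ihb hp with h | ⟨u, hu, rfl⟩
      · exact Or.inl h
      · exact Or.inr ⟨u, .right hu, rfl⟩

/-- Substituting a reduced term `r = r₁·r₂` with `none` occurring in both
factors into a reduced term yields a reduced term. -/
theorem subst_reduced [DecidableEq ι] {r₁ r₂ : Term (Option ι)}
    (hr : Reduced (.mul r₁ r₂)) (h1 : 1 ≤ r₁.occ none) (h2 : 1 ≤ r₂.occ none)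
    {t : Term (Option ι)} (ht : Reduced t) : Reduced (subst (.mul r₁ r₂) t) := by
  set r : Term (Option ι) := .mul r₁ r₂ with hrdef
  -- no σ-image of a term can be TEquiv to r₁ or to r₂
  have hocc : ∀ u : Term (Option ι),
      TEquiv (subst r u) r₁ ∨ TEquiv (subst r u) r₂ → False := by
    intro u hu
    have hrocc : r.occ none = r₁.occ none + r₂.occ none := rfl
    rcases hu with hu | hu <;>
    · have := tequiv_occ none hu
      rw [occ_subst] at this
      rcases Nat.eq_zero_or_pos (u.occ none) with h0 | h0
      · rw [h0, Nat.zero_mul] at this; omega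
      · have : u.occ none * r.occ none ≥ r.occ none := Nat.le_mul_of_pos_left _ h0
        omega
  have hinj := subst_inj_tequiv h1 h2
  -- classification of mul-subterms of σ t that are σ-images
  refine ⟨fun t1 t2 hs => ?_, fun t1 t2 t3 hs => ?_, fun t1 t2 t3 hs => ?_⟩
  · rcases subterm_subst hs with h | ⟨u, hu, heq⟩
    · exact hr.1 _ _ h
    · cases u with
      | var x =>
        cases x with
        | none =>
          -- σ u = r : t1 = r₁, t2 = r₂
          simp only [subst] at heq
          injection heq with e1 e2; subst e1; subst e2
          exact hr.1 _ _ (.refl _)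
        | some i => simp [subst] at heq
      | mul u₁ u₂ =>
        simp only [subst] at heq
        injection heq with e1 e2; subst e1; subst e2
        intro hT
        exact (reduced_of_subterm ht hu).1 _ _ (.refl _) (hinj _ _ hT)
  · rcases subterm_subst hs with h | ⟨u, hu, heq⟩
    · exact hr.2.1 _ _ _ h
    · cases u with
      | var x =>
        cases x with
        | none =>
          simp only [subst] at heq
          injection heq with e1 e2; subst e1
          exact hr.2.1 _ _ _ (by rw [e2]; exact .refl _)
        | some i => simp [subst] at heq
      | mul u₁ u₂ =>
        simp only [subst] at heq
        injection heq with e1 e2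
        subst e1
        cases u₂ with
        | var x =>
          cases x with
          | none =>
            -- subst r (var none) = r = mul r₁ r₂ = mul t2 t3
            simp only [subst] at e2
            injection e2 with e3 e4; subst e3; subst e4
            constructor
            · intro hT; exact hocc u₁ (Or.inl hT)
            · intro hT; exact hocc u₁ (Or.inr hT)
          | some i => simp [subst] at e2
        | mul u₂₁ u₂₂ =>
          simp only [subst] at e2
          injection e2 with e3 e4; subst e3; subst e4
          have hred := (reduced_of_subterm ht hu).2.1 _ _ _ (.refl _)
          exact ⟨fun hT => hred.1 (hinj _ _ hT), fun hT => hred.2 (hinj _ _ hT)⟩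
  · rcases subterm_subst hs with h | ⟨u, hu, heq⟩
    · exact hr.2.2 _ _ _ h
    · cases u with
      | var x =>
        cases x with
        | none =>
          simp only [subst] at heq
          injection heq with e1 e2; subst e2
          exact hr.2.2 _ _ _ (by rw [e1]; exact .refl _)
        | some i => simp [subst] at heq
      | mul u₁ u₂ =>
        simp only [subst] at heq
        injection heq with e1 e2
        subst e2
        cases u₁ with
        | var x =>
          cases x with
          | none =>
            simp only [subst] at e1
            injection e1 with e3 e4; subst e3; subst e4
            constructor
            · intro hT; exact hocc u₂ (Or.inl hT.symm)
            · intro hT; exact hocc u₂ (Or.inr hT.symm)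
          | some i => simp [subst] at e1
        | mul u₁₁ u₁₂ =>
          simp only [subst] at e1
          injection e1 with e3 e4; subst e3; subst e4
          have hred := (reduced_of_subterm ht hu).2.2 _ _ _ (.refl _)
          exact ⟨fun hT => hred.1 (hinj _ _ hT), fun hT => hred.2 (hinj _ _ hT)⟩

end Aux19

namespace Aux19
open Steiner

variable {α : Type}

theorem rank_lt_left (a b : Term α) : a.rank < (Term.mul a b).rank :=
  Nat.lt_succ_of_le (Nat.le_max_left _ _)

theorem rank_lt_right (a b : Term α) : b.rank < (Term.mul a b).rank :=
  Nat.lt_succ_of_le (Nat.le_max_right _ _)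

open scoped Classical in
/-- Multiplication of reduced terms. -/
noncomputable def m (t s : Term α) : Term α :=
  if TEquiv t s then t
  else
    (match s with
      | .mul s₁ s₂ =>
        if TEquiv t s₁ then some s₂ else if TEquiv t s₂ then some s₁ else none
      | .var _ => none).getD
    ((match t with
      | .mul t₁ t₂ =>
        if TEquiv t₁ s then some t₂ else if TEquiv t₂ s then some t₁ else none
      | .var _ => none).getD (.mul t s))

theorem m_P1 {t s : Term α} (h : TEquiv t s) : m t s = t := by
  rw [m.eq_def, if_pos h]

theorem m_self (t : Term α) : m t t = t := m_P1 (.refl t)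

theorem m_P2 {t s₁ s₂ : Term α} (h : TEquiv t s₁) : m t (.mul s₁ s₂) = s₂ := by
  have hE : ¬ TEquiv t (.mul s₁ s₂) := fun hc =>
    absurd ((tequiv_rank h).symm.trans (tequiv_rank hc))
      (Nat.ne_of_lt (rank_lt_left s₁ s₂))
  rw [m.eq_def, if_neg hE]
  simp only [if_pos h, Option.getD_some]

theorem m_P3 {t s₁ s₂ : Term α} (h : TEquiv t s₂) (h1 : ¬ TEquiv t s₁) :
    m t (.mul s₁ s₂) = s₁ := by
  have hE : ¬ TEquiv t (.mul s₁ s₂) := fun hc =>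
    absurd ((tequiv_rank h).symm.trans (tequiv_rank hc))
      (Nat.ne_of_lt (rank_lt_right s₁ s₂))
  rw [m.eq_def, if_neg hE]
  simp only [if_neg h1, if_pos h, Option.getD_some]

theorem m_P4 {t₁ t₂ s : Term α} (h : TEquiv t₁ s) : m (.mul t₁ t₂) s = t₂ := by
  have hrk : s.rank < (Term.mul t₁ t₂).rank := tequiv_rank h ▸ rank_lt_left t₁ t₂
  have hE : ¬ TEquiv (Term.mul t₁ t₂) s := fun hc =>
    absurd (tequiv_rank hc) (Nat.ne_of_gt hrk)
  rw [m.eq_def, if_neg hE]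
  cases s with
  | var y => simp only [if_pos h, Option.getD_none, Option.getD_some]
  | mul s₁ s₂ =>
    have hC1 : ¬ TEquiv (Term.mul t₁ t₂) s₁ := fun hc =>
      absurd (tequiv_rank hc) (Nat.ne_of_lt (lt_trans (rank_lt_left s₁ s₂) hrk)).symm
    have hC2 : ¬ TEquiv (Term.mul t₁ t₂) s₂ := fun hc =>
      absurd (tequiv_rank hc) (Nat.ne_of_lt (lt_trans (rank_lt_right s₁ s₂) hrk)).symm
    simp only [if_neg hC1, if_neg hC2, if_pos h, Option.getD_none, Option.getD_some]

theorem m_P5 {t₁ t₂ s : Term α} (h : TEquiv t₂ s) (h1 : ¬ TEquiv t₁ s) :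
    m (.mul t₁ t₂) s = t₁ := by
  have hrk : s.rank < (Term.mul t₁ t₂).rank := tequiv_rank h ▸ rank_lt_right t₁ t₂
  have hE : ¬ TEquiv (Term.mul t₁ t₂) s := fun hc =>
    absurd (tequiv_rank hc) (Nat.ne_of_gt hrk)
  rw [m.eq_def, if_neg hE]
  cases s with
  | var y => simp only [if_neg h1, if_pos h, Option.getD_none, Option.getD_some]
  | mul s₁ s₂ =>
    have hC1 : ¬ TEquiv (Term.mul t₁ t₂) s₁ := fun hc =>
      absurd (tequiv_rank hc) (Nat.ne_of_lt (lt_trans (rank_lt_left s₁ s₂) hrk)).symm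
    have hC2 : ¬ TEquiv (Term.mul t₁ t₂) s₂ := fun hc =>
      absurd (tequiv_rank hc) (Nat.ne_of_lt (lt_trans (rank_lt_right s₁ s₂) hrk)).symm
    simp only [if_neg hC1, if_neg hC2, if_neg h1, if_pos h, Option.getD_none,
      Option.getD_some]

theorem m_P6 {t s : Term α} (hE : ¬ TEquiv t s)
    (hC : ∀ s₁ s₂, s = .mul s₁ s₂ → ¬ TEquiv t s₁ ∧ ¬ TEquiv t s₂)
    (hD : ∀ t₁ t₂, t = .mul t₁ t₂ → ¬ TEquiv t₁ s ∧ ¬ TEquiv t₂ s) :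
    m t s = .mul t s := by
  rw [m.eq_def, if_neg hE]
  cases s with
  | var y =>
    cases t with
    | var x => simp only [Option.getD_none]
    | mul t₁ t₂ =>
      obtain ⟨hd1, hd2⟩ := hD t₁ t₂ rfl
      simp only [if_neg hd1, if_neg hd2, Option.getD_none]
  | mul s₁ s₂ =>
    obtain ⟨hc1, hc2⟩ := hC s₁ s₂ rfl
    cases t with
    | var x => simp only [if_neg hc1, if_neg hc2, Option.getD_none]
    | mul t₁ t₂ =>
      obtain ⟨hd1, hd2⟩ := hD t₁ t₂ rfl
      simp only [if_neg hc1, if_neg hc2, if_neg hd1, if_neg hd2, Option.getD_none]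

/-- Case analysis for `m t s` on reduced terms. -/
theorem m_master {t s : Term α} (ht : Reduced t) (hs : Reduced s) :
    (TEquiv t s ∧ m t s = t) ∨
    (∃ s₁ s₂, s = .mul s₁ s₂ ∧ ¬ TEquiv t s ∧ TEquiv t s₁ ∧ ¬ TEquiv t s₂ ∧
      m t s = s₂) ∨
    (∃ s₁ s₂, s = .mul s₁ s₂ ∧ ¬ TEquiv t s ∧ ¬ TEquiv t s₁ ∧ TEquiv t s₂ ∧
      m t s = s₁) ∨
    (∃ t₁ t₂, t = .mul t₁ t₂ ∧ ¬ TEquiv t s ∧ TEquiv t₁ s ∧ ¬ TEquiv t₂ s ∧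
      m t s = t₂) ∨
    (∃ t₁ t₂, t = .mul t₁ t₂ ∧ ¬ TEquiv t s ∧ ¬ TEquiv t₁ s ∧ TEquiv t₂ s ∧
      m t s = t₁) ∨
    (¬ TEquiv t s ∧
      (∀ s₁ s₂, s = .mul s₁ s₂ → ¬ TEquiv t s₁ ∧ ¬ TEquiv t s₂) ∧
      (∀ t₁ t₂, t = .mul t₁ t₂ → ¬ TEquiv t₁ s ∧ ¬ TEquiv t₂ s) ∧
      m t s = .mul t s) := by
  by_cases hE : TEquiv t s
  · exact Or.inl ⟨hE, m_P1 hE⟩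
  · by_cases hC : ∃ s₁ s₂, s = Term.mul s₁ s₂ ∧ (TEquiv t s₁ ∨ TEquiv t s₂)
    · obtain ⟨s₁, s₂, rfl, hc⟩ := hC
      rcases hc with hc | hc
      · have hc2 : ¬ TEquiv t s₂ := fun h2 => hs.1 s₁ s₂ (.refl _) (hc.symm.trans h2)
        exact Or.inr (Or.inl ⟨s₁, s₂, rfl, hE, hc, hc2, m_P2 hc⟩)
      · by_cases hc1 : TEquiv t s₁
        · have hc2 : ¬ TEquiv t s₂ := fun h2 => hs.1 s₁ s₂ (.refl _) (hc1.symm.trans h2)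
          exact absurd hc hc2
        · exact Or.inr (Or.inr (Or.inl ⟨s₁, s₂, rfl, hE, hc1, hc, m_P3 hc hc1⟩))
    · by_cases hD : ∃ t₁ t₂, t = Term.mul t₁ t₂ ∧ (TEquiv t₁ s ∨ TEquiv t₂ s)
      · obtain ⟨t₁, t₂, rfl, hd⟩ := hD
        rcases hd with hd | hd
        · have hd2 : ¬ TEquiv t₂ s := fun h2 => ht.1 t₁ t₂ (.refl _) (hd.trans h2.symm)
          exact Or.inr (Or.inr (Or.inr (Or.inl ⟨t₁, t₂, rfl, hE, hd, hd2, m_P4 hd⟩)))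
        · by_cases hd1 : TEquiv t₁ s
          · have hd2 : ¬ TEquiv t₂ s := fun h2 => ht.1 t₁ t₂ (.refl _) (hd1.trans h2.symm)
            exact absurd hd hd2
          · exact Or.inr (Or.inr (Or.inr (Or.inr (Or.inl
              ⟨t₁, t₂, rfl, hE, hd1, hd, m_P5 hd hd1⟩))))
      · push_neg at hC hD
        exact Or.inr (Or.inr (Or.inr (Or.inr (Or.inr
          ⟨hE, hC, hD, m_P6 hE hC hD⟩))))

end Aux19

namespace Aux19
open Steiner

variable {α : Type}

theorem m_reduced {t s : Term α} (ht : Reduced t) (hs : Reduced s) :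
    Reduced (m t s) := by
  rcases m_master ht hs with ⟨_, hm⟩ | ⟨s₁, s₂, rfl, _, _, _, hm⟩ |
    ⟨s₁, s₂, rfl, _, _, _, hm⟩ | ⟨t₁, t₂, rfl, _, _, _, hm⟩ |
    ⟨t₁, t₂, rfl, _, _, _, hm⟩ | ⟨hE, hC, hD, hm⟩
  · rw [hm]; exact ht
  · rw [hm]; exact reduced_mul_right hs
  · rw [hm]; exact reduced_mul_left hs
  · rw [hm]; exact reduced_mul_right ht
  · rw [hm]; exact reduced_mul_left ht
  · rw [hm]; exact reduced_mul_intro ht hs hE hC hD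

theorem m_seq {t s : Term α} (ht : Reduced t) (hs : Reduced s) :
    SEq (.mul t s) (m t s) := by
  rcases m_master ht hs with ⟨hE, hm⟩ | ⟨s₁, s₂, rfl, _, hc, _, hm⟩ |
    ⟨s₁, s₂, rfl, _, _, hc, hm⟩ | ⟨t₁, t₂, rfl, _, hd, _, hm⟩ |
    ⟨t₁, t₂, rfl, _, _, hd, hm⟩ | ⟨_, _, _, hm⟩ <;> rw [hm]
  · exact (SEq.congr (.refl t) (seq_of_tequiv hE).symm).trans (.idem t)
  · exact (SEq.congr (seq_of_tequiv hc) (.refl _)).trans (.lcancel s₁ s₂)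
  · exact (SEq.congr (seq_of_tequiv hc) (.refl _)).trans
      ((SEq.congr (.refl s₂) (.comm s₁ s₂)).trans (.lcancel s₂ s₁))
  · exact (SEq.comm _ _).trans ((SEq.congr (seq_of_tequiv hd).symm (.refl _)).trans
      (.lcancel t₁ t₂))
  · exact (SEq.comm _ _).trans ((SEq.congr (seq_of_tequiv hd).symm (.comm t₁ t₂)).trans
      (.lcancel t₂ t₁))
  · exact .refl _

theorem m_comm {t s : Term α} (ht : Reduced t) (hs : Reduced s) :
    TEquiv (m t s) (m s t) := by
  rcases m_master ht hs with ⟨hE, hm⟩ | ⟨s₁, s₂, rfl, _, hc, hc2, hm⟩ |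
    ⟨s₁, s₂, rfl, _, hc1, hc, hm⟩ | ⟨t₁, t₂, rfl, _, hd, _, hm⟩ |
    ⟨t₁, t₂, rfl, _, hd1, hd, hm⟩ | ⟨hE, hC, hD, hm⟩ <;> rw [hm]
  · rw [m_P1 hE.symm]; exact hE
  · rw [m_P4 hc.symm]; exact .refl _
  · rw [m_P5 hc.symm (fun h => hc1 h.symm)]; exact .refl _
  · rw [m_P2 hd.symm]; exact .refl _
  · rw [m_P3 hd.symm (fun h => hd1 h.symm)]; exact .refl _
  · rw [m_P6 (fun h => hE h.symm)
      (fun t₁ t₂ htt => ⟨fun h => (hD t₁ t₂ htt).1 h.symm, fun h => (hD t₁ t₂ htt).2 h.symm⟩)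
      (fun s₁ s₂ hss => ⟨fun h => (hC s₁ s₂ hss).1 h.symm, fun h => (hC s₁ s₂ hss).2 h.symm⟩)]
    exact .comm t s

theorem m_lcancel {t s : Term α} (ht : Reduced t) (hs : Reduced s) :
    TEquiv (m t (m t s)) s := by
  rcases m_master ht hs with ⟨hE, hm⟩ | ⟨s₁, s₂, rfl, _, hc, hc2, hm⟩ |
    ⟨s₁, s₂, rfl, _, hc1, hc, hm⟩ | ⟨t₁, t₂, rfl, _, hd, hd2, hm⟩ |
    ⟨t₁, t₂, rfl, _, hd1, hd, hm⟩ | ⟨hE, hC, hD, hm⟩ <;> rw [hm]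
  · rw [m_self]; exact hE
  · -- m t s₂ = mul t s₂ by P6
    rw [m_P6 hc2 ?_ ?_]
    · exact .congr hc (.refl s₂)
    · intro u v huv
      have h2 := hs.2.1 s₁ u v (by rw [huv]; exact .refl _)
      exact ⟨fun h => h2.1 (hc.symm.trans h), fun h => h2.2 (hc.symm.trans h)⟩
    · intro a b hab
      subst hab
      obtain ⟨c, d, hcd, hh⟩ := tequiv_mul hc
      have h2 := hs.2.2 c d s₂ (by rw [hcd]; exact .refl _)
      rcases hh with ⟨h1', h2'⟩ | ⟨h1', h2'⟩
      · exact ⟨fun h => h2.1 (h1'.symm.trans h), fun h => h2.2 (h2'.symm.trans h)⟩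
      · exact ⟨fun h => h2.2 (h1'.symm.trans h), fun h => h2.1 (h2'.symm.trans h)⟩
  · rw [m_P6 hc1 ?_ ?_]
    · exact (TEquiv.congr hc (.refl s₁)).trans (.comm s₂ s₁)
    · intro u v huv
      have h2 := hs.2.2 u v s₂ (by rw [huv]; exact .refl _)
      exact ⟨fun h => h2.1 (h.symm.trans hc), fun h => h2.2 (h.symm.trans hc)⟩
    · intro a b hab
      subst hab
      obtain ⟨c, d, hcd, hh⟩ := tequiv_mul hc
      have h2 := hs.2.1 s₁ c d (by rw [hcd]; exact .refl _)
      rcases hh with ⟨h1', h2'⟩ | ⟨h1', h2'⟩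
      · exact ⟨fun h => h2.1 (h.symm.trans h1'), fun h => h2.2 (h.symm.trans h2')⟩
      · exact ⟨fun h => h2.2 (h.symm.trans h1'), fun h => h2.1 (h.symm.trans h2')⟩
  · rw [m_P5 (.refl t₂) (fun h => ht.1 t₁ t₂ (.refl _) h)]
    exact hd
  · rw [m_P4 (.refl t₁)]
    exact hd
  · rw [m_P2 (.refl t)]
    exact .refl s

theorem m_respects {t t' s s' : Term α} (ht : Reduced t) (hs : Reduced s)
    (ht' : Reduced t') (hs' : Reduced s')
    (htt : TEquiv t t') (hss : TEquiv s s') :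
    TEquiv (m t s) (m t' s') := by
  rcases m_master ht hs with ⟨hE, hm⟩ | ⟨s₁, s₂, rfl, _, hc, hc2, hm⟩ |
    ⟨s₁, s₂, rfl, _, hc1, hc, hm⟩ | ⟨t₁, t₂, rfl, _, hd, hd2, hm⟩ |
    ⟨t₁, t₂, rfl, _, hd1, hd, hm⟩ | ⟨hE, hC, hD, hm⟩ <;> rw [hm]
  · rw [m_P1 (htt.symm.trans (hE.trans hss))]; exact htt
  · obtain ⟨u, v, rfl, hh⟩ := tequiv_mul hss
    rcases hh with ⟨h1, h2⟩ | ⟨h1, h2⟩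
    · rw [m_P2 (htt.symm.trans (hc.trans h1))]; exact h2
    · rw [m_P3 (htt.symm.trans (hc.trans h1))
        (fun h => hc2 (htt.trans (h.trans h2.symm)))]
      exact h2
  · obtain ⟨u, v, rfl, hh⟩ := tequiv_mul hss
    rcases hh with ⟨h1, h2⟩ | ⟨h1, h2⟩
    · rw [m_P3 (htt.symm.trans (hc.trans h2))
        (fun h => hc1 (htt.trans (h.trans h1.symm)))]
      exact h1
    · rw [m_P2 (htt.symm.trans (hc.trans h2))]; exact h1
  · obtain ⟨a, b, rfl, hh⟩ := tequiv_mul htt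
    rcases hh with ⟨h1, h2⟩ | ⟨h1, h2⟩
    · rw [m_P4 (h1.symm.trans (hd.trans hss))]; exact h2
    · rw [m_P5 (h1.symm.trans (hd.trans hss))
        (fun h => hd2 (h2.trans (h.trans hss.symm)))]
      exact h2
  · obtain ⟨a, b, rfl, hh⟩ := tequiv_mul htt
    rcases hh with ⟨h1, h2⟩ | ⟨h1, h2⟩
    · rw [m_P5 (h2.symm.trans (hd.trans hss))
        (fun h => hd1 (h1.trans (h.trans hss.symm)))]
      exact h1
    · rw [m_P4 (h2.symm.trans (hd.trans hss))]; exact h1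
  · rw [m_P6 (fun h => hE (htt.trans (h.trans hss.symm))) ?_ ?_]
    · exact .congr htt hss
    · intro u v huv
      subst huv
      obtain ⟨s₁, s₂, rfl, hh⟩ := tequiv_mul (t₁ := u) (t₂ := v) hss.symm
      have h2 := hC s₁ s₂ rfl
      rcases hh with ⟨h1', h2'⟩ | ⟨h1', h2'⟩
      · exact ⟨fun h => h2.1 (htt.trans (h.trans h1')),
          fun h => h2.2 (htt.trans (h.trans h2'))⟩
      · exact ⟨fun h => h2.2 (htt.trans (h.trans h1')),
          fun h => h2.1 (htt.trans (h.trans h2'))⟩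
    · intro a b hab
      subst hab
      obtain ⟨t₁, t₂, rfl, hh⟩ := tequiv_mul (t₁ := a) (t₂ := b) htt.symm
      have h2 := hD t₁ t₂ rfl
      rcases hh with ⟨h1', h2'⟩ | ⟨h1', h2'⟩
      · exact ⟨fun h => h2.1 (h1'.symm.trans (h.trans hss.symm)),
          fun h => h2.2 (h2'.symm.trans (h.trans hss.symm))⟩
      · exact ⟨fun h => h2.2 (h1'.symm.trans (h.trans hss.symm)),
          fun h => h2.1 (h2'.symm.trans (h.trans hss.symm))⟩

end Aux19

namespace Aux19
open Steiner

variable {α : Type}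

/-- Reduced terms. -/
def RTerm (α : Type) : Type := {t : Term α // Reduced t}

instance rsetoid (α : Type) : Setoid (RTerm α) :=
  ⟨fun a b => TEquiv a.1 b.1, ⟨fun a => .refl _, TEquiv.symm, TEquiv.trans⟩⟩

theorem rsetoid_iff {a b : RTerm α} : a ≈ b ↔ TEquiv a.1 b.1 := Iff.rfl

/-- The free Steiner quasigroup modelled on reduced terms. -/
abbrev Q (α : Type) : Type := Quotient (rsetoid α)

noncomputable instance : Steiner (Q α) where
  mul := Quotient.map₂ (fun a b => ⟨m a.1 b.1, m_reduced a.2 b.2⟩)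
    (fun a a' ha b b' hb => m_respects a.2 b.2 a'.2 b'.2 ha hb)
  comm := by
    intro x y
    induction x using Quotient.ind with | _ a =>
    induction y using Quotient.ind with | _ b =>
    exact Quotient.sound (m_comm a.2 b.2)
  idem := by
    intro x
    induction x using Quotient.ind with | _ a =>
    exact Quotient.sound (show TEquiv (m a.1 a.1) a.1 by rw [m_self]; exact .refl _)
  lcancel := by
    intro x y
    induction x using Quotient.ind with | _ a =>
    induction y using Quotient.ind with | _ b =>
    exact Quotient.sound (m_lcancel a.2 b.2)

theorem q_mul (a b : RTerm α) :
    (⟦a⟧ : Q α) * ⟦b⟧ = ⟦⟨m a.1 b.1, m_reduced a.2 b.2⟩⟧ := rfl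

/-- Evaluation of terms in the reduced-term model. -/
noncomputable def evalQ (t : Term α) : Q α :=
  t.eval (fun x => ⟦⟨.var x, reduced_var x⟩⟧)

theorem evalQ_mul (a b : Term α) : evalQ (.mul a b) = evalQ a * evalQ b := rfl

theorem m_eq_of_reduced {a b : Term α} (h : Reduced (.mul a b)) :
    m a b = .mul a b := by
  apply m_P6 (h.1 a b (.refl _))
  · intro s₁ s₂ hs
    exact h.2.1 a s₁ s₂ (by rw [← hs]; exact .refl _)
  · intro t₁ t₂ ht
    exact h.2.2 t₁ t₂ b (by rw [← ht]; exact .refl _)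

theorem evalQ_reduced : ∀ (t : Term α) (h : Reduced t), evalQ t = ⟦⟨t, h⟩⟧ := by
  intro t
  induction t with
  | var x => intro h; rfl
  | mul a b iha ihb =>
    intro h
    rw [evalQ_mul, iha (reduced_mul_left h), ihb (reduced_mul_right h)]
    refine (q_mul _ _).trans ?_
    exact Quotient.sound (show TEquiv (m a b) (Term.mul a b) by
      rw [m_eq_of_reduced h]; exact .refl _)

theorem exists_red (t : Term α) :
    ∃ (t' : Term α) (h : Reduced t'), SEq t t' ∧ evalQ t = ⟦⟨t', h⟩⟧ := by
  induction t with
  | var x => exact ⟨.var x, reduced_var x, .refl _, rfl⟩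
  | mul a b iha ihb =>
    obtain ⟨a', ha, sa, ea⟩ := iha
    obtain ⟨b', hb, sb, eb⟩ := ihb
    refine ⟨m a' b', m_reduced ha hb, (SEq.congr sa sb).trans (m_seq ha hb), ?_⟩
    rw [evalQ_mul, ea, eb]
    exact q_mul _ _

theorem seq_iff {t s : Term α} : SEq t s ↔ evalQ t = evalQ s := by
  constructor
  · exact fun h => seq_eval _ h
  · intro h
    obtain ⟨t', ht, st, et⟩ := exists_red t
    obtain ⟨s', hs, ss, es⟩ := exists_red s
    rw [et, es] at h
    exact (st.trans (seq_of_tequiv (Quotient.exact h))).trans ss.symm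

end Aux19

namespace Aux19
open Steiner

variable {ι : Type} [DecidableEq ι]

theorem rank_le_of_mul_le {r₁ r₂ : Term (Option ι)} {n : ℕ}
    (h : (Term.mul r₁ r₂).rank ≤ n + 1) : r₁.rank ≤ n ∧ r₂.rank ≤ n := by
  simp only [Term.rank] at h
  omega

theorem main_inj :
    ∀ (n : ℕ) (r : Term (Option ι)), r.rank ≤ n → Reduced r → 2 ≤ r.occ none →
      (∀ t s, SEq (subst r t) (subst r s) → SEq t s) ∧
      (∀ s, ¬ SEq (.var none) (subst r s)) := by
  intro n
  induction n with
  | zero =>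
    intro r hrk hr hocc
    exfalso
    cases r with
    | var x => cases x <;> simp [Term.occ] at hocc
    | mul r₁ r₂ => simp [Term.rank] at hrk
  | succ n ih =>
    intro r hrk hr hocc
    cases r with
    | var x => exfalso; cases x <;> simp [Term.occ] at hocc
    | mul r₁ r₂ =>
      have hoccsum : (Term.mul r₁ r₂).occ none = r₁.occ none + r₂.occ none := rfl
      obtain ⟨hrk1, hrk2⟩ := rank_le_of_mul_le hrk
      rcases Nat.eq_zero_or_pos (r₂.occ none) with h20 | h2pos
      · -- none occurs only in r₁
        set w : Term (Option ι) := .mul (.var none) r₂ with hw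
        have key : ∀ u, subst (.mul r₁ r₂) u = subst r₁ (subst w u) := by
          intro u
          rw [subst_subst]
          have : subst r₁ w = .mul r₁ r₂ := by
            simp only [hw, subst, subst_of_occ_zero h20]
          rw [this]
        have hr1occ : 2 ≤ r₁.occ none := by omega
        have IH := ih r₁ hrk1 (reduced_mul_left hr) hr1occ
        have hww : SEq (subst w w) (.var none) := by
          have : subst w w = .mul w r₂ := by
            simp only [hw, subst, subst_of_occ_zero h20]
          rw [this, hw]
          exact (SEq.comm _ _).trans ((SEq.congr (.refl r₂) (.comm _ _)).trans
            (.lcancel r₂ (.var none)))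
        constructor
        · intro t s h
          rw [key t, key s] at h
          have h1 := IH.1 _ _ h
          have h2 := seq_subst w h1
          rw [subst_subst, subst_subst] at h2
          have h3 := (seq_subst_left hww t).symm.trans
            (h2.trans (seq_subst_left hww s))
          rwa [subst_var, subst_var] at h3
        · intro s h
          rw [key s] at h
          exact IH.2 _ h
      · rcases Nat.eq_zero_or_pos (r₁.occ none) with h10 | h1pos
        · -- none occurs only in r₂
          set w : Term (Option ι) := .mul r₁ (.var none) with hw
          have key : ∀ u, subst (.mul r₁ r₂) u = subst r₂ (subst w u) := by
            intro u
            rw [subst_subst]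
            have : subst r₂ w = .mul r₁ r₂ := by
              simp only [hw, subst, subst_of_occ_zero h10]
            rw [this]
          have hr2occ : 2 ≤ r₂.occ none := by omega
          have IH := ih r₂ hrk2 (reduced_mul_right hr) hr2occ
          have hww : SEq (subst w w) (.var none) := by
            have : subst w w = .mul r₁ w := by
              simp only [hw, subst, subst_of_occ_zero h10]
            rw [this, hw]
            exact .lcancel r₁ (.var none)
          constructor
          · intro t s h
            rw [key t, key s] at h
            have h1 := IH.1 _ _ h
            have h2 := seq_subst w h1
            rw [subst_subst, subst_subst] at h2
            have h3 := (seq_subst_left hww t).symm.trans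
              (h2.trans (seq_subst_left hww s))
            rwa [subst_var, subst_var] at h3
          · intro s h
            rw [key s] at h
            exact IH.2 _ h
        · -- none occurs in both factors
          constructor
          · intro t s h
            obtain ⟨t', ht', st, _⟩ := exists_red t
            obtain ⟨s', hs', ss, _⟩ := exists_red s
            have h' : SEq (subst (.mul r₁ r₂) t') (subst (.mul r₁ r₂) s') :=
              ((seq_subst _ st).symm.trans h).trans (seq_subst _ ss)
            have hrt := subst_reduced hr h1pos h2pos ht'
            have hrs := subst_reduced hr h1pos h2pos hs'
            have hQ : evalQ (subst (.mul r₁ r₂) t') = evalQ (subst (.mul r₁ r₂) s') :=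
              seq_iff.mp h'
            rw [evalQ_reduced _ hrt, evalQ_reduced _ hrs] at hQ
            have hT : TEquiv (subst (.mul r₁ r₂) t') (subst (.mul r₁ r₂) s') :=
              Quotient.exact hQ
            have := subst_inj_tequiv h1pos h2pos t' s' hT
            exact (st.trans (seq_of_tequiv this)).trans ss.symm
          · intro s h
            obtain ⟨s', hs', ss, _⟩ := exists_red s
            have h' : SEq (Term.var none) (subst (.mul r₁ r₂) s') :=
              h.trans (seq_subst _ ss)
            have hrs := subst_reduced hr h1pos h2pos hs'
            have hQ : evalQ (Term.var (none : Option ι)) =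
                evalQ (subst (.mul r₁ r₂) s') := seq_iff.mp h'
            rw [evalQ_reduced _ (reduced_var none), evalQ_reduced _ hrs] at hQ
            have hT := Quotient.exact hQ
            have := tequiv_var (x := (none : Option ι)) hT
            cases s' with
            | var x =>
              cases x with
              | none => simp [subst] at this
              | some i => simp [subst] at this
            | mul a b => simp [subst] at this

end Aux19

/-- For an independent tuple `e = (ā, b)` and a reduced term `r` with at least
two occurrences of `y = none`, setting `c = r(ā, b)`, the homomorphism
`⟨ā, b⟩ → ⟨ā, c⟩` induced by `ā ↦ ā`, `b ↦ c` is an isomorphism, and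
`b ∉ ⟨ā, c⟩`. -/
theorem stmt19 {M : Type} [Steiner M] {ι : Type} [DecidableEq ι]
    (e : Option ι → M) (he : IndepTuple e)
    (r : Term (Option ι)) (hr : Reduced r) (hocc : 2 ≤ r.occ none)
    (c : M) (hc : c = r.eval e)
    (f : closure (Set.range e) →ₙ* closure (insert c (Set.range fun i : ι => e (some i))))
    (hfa : ∀ i : ι, f ⟨e (some i), mem_closure.base ⟨some i, rfl⟩⟩ =
      ⟨e (some i), mem_closure.base (Set.mem_insert_iff.mpr (Or.inr ⟨i, rfl⟩))⟩)
    (hfb : f ⟨e none, mem_closure.base ⟨none, rfl⟩⟩ =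
      ⟨c, mem_closure.base (Set.mem_insert c _)⟩) :
    Function.Bijective f ∧
      e none ∉ closure (insert c (Set.range fun i : ι => e (some i))) := by
  classical
  obtain ⟨hinj, hind⟩ := he
  have hmemA : ∀ x : Option ι, e x ∈ Set.range e := fun x => ⟨x, rfl⟩
  obtain ⟨g, hg⟩ := hind (Aux19.Q (Option ι))
    (fun a => ⟦⟨.var a.2.choose, Aux19.reduced_var _⟩⟧)
  have hgen : ∀ x : Option ι,
      g ⟨e x, mem_closure.base ⟨x, rfl⟩⟩ = ⟦⟨.var x, Aux19.reduced_var x⟩⟧ := by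
    intro x
    have h1 := hg ⟨e x, ⟨x, rfl⟩⟩
    have h2 : (⟨e x, ⟨x, rfl⟩⟩ : Set.range e).2.choose = x :=
      hinj (⟨e x, ⟨x, rfl⟩⟩ : Set.range e).2.choose_spec
    rw [h2] at h1
    exact h1
  have geval : ∀ t : Term (Option ι),
      g ⟨t.eval e, eval_mem_closure e hmemA t⟩ = Aux19.evalQ t := by
    intro t
    induction t with
    | var x =>
      have hx : (⟨Term.eval e (.var x), eval_mem_closure e hmemA (.var x)⟩ :
          closure (Set.range e)) = ⟨e x, mem_closure.base ⟨x, rfl⟩⟩ := Subtype.ext rfl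
      rw [hx, hgen]
      rfl
    | mul a b iha ihb =>
      have hx : (⟨Term.eval e (.mul a b), eval_mem_closure e hmemA (.mul a b)⟩ :
          closure (Set.range e)) =
          ⟨Term.eval e a, eval_mem_closure e hmemA a⟩ *
          ⟨Term.eval e b, eval_mem_closure e hmemA b⟩ := Subtype.ext rfl
      rw [hx, map_mul, iha, ihb]
      rfl
  have eval_inj : ∀ t s : Term (Option ι), t.eval e = s.eval e → Aux19.SEq t s := by
    intro t s h
    apply Aux19.seq_iff.mpr
    rw [← geval t, ← geval s]
    exact congrArg g (Subtype.ext h)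
  have feval : ∀ t : Term (Option ι),
      (f ⟨t.eval e, eval_mem_closure e hmemA t⟩).1 = (Aux19.subst r t).eval e := by
    intro t
    induction t with
    | var x =>
      cases x with
      | none =>
        have hx : (⟨Term.eval e (.var none), eval_mem_closure e hmemA (.var none)⟩ :
            closure (Set.range e)) = ⟨e none, mem_closure.base ⟨none, rfl⟩⟩ :=
          Subtype.ext rfl
        rw [hx, hfb]
        exact hc
      | some i =>
        have hx : (⟨Term.eval e (.var (some i)),
            eval_mem_closure e hmemA (.var (some i))⟩ :
            closure (Set.range e)) = ⟨e (some i), mem_closure.base ⟨some i, rfl⟩⟩ :=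
          Subtype.ext rfl
        rw [hx, hfa]
        rfl
    | mul a b iha ihb =>
      have hx : (⟨Term.eval e (.mul a b), eval_mem_closure e hmemA (.mul a b)⟩ :
          closure (Set.range e)) =
          ⟨Term.eval e a, eval_mem_closure e hmemA a⟩ *
          ⟨Term.eval e b, eval_mem_closure e hmemA b⟩ := Subtype.ext rfl
      rw [hx, map_mul]
      show (f _).1 * (f _).1 = _
      rw [iha, ihb]
      rfl
  refine ⟨⟨?_, ?_⟩, ?_⟩
  · -- injectivity
    intro u v huv
    have repr : ∀ w, mem_closure (Set.range e) w →
        ∃ t : Term (Option ι), w = t.eval e := by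
      intro w hw
      induction hw with
      | base h => obtain ⟨x, rfl⟩ := h; exact ⟨.var x, rfl⟩
      | mul h1 h2 ih1 ih2 =>
        obtain ⟨t1, rfl⟩ := ih1
        obtain ⟨t2, rfl⟩ := ih2
        exact ⟨.mul t1 t2, rfl⟩
    obtain ⟨t, ht⟩ := repr u.1 u.2
    obtain ⟨s, hs⟩ := repr v.1 v.2
    have hu : u = ⟨t.eval e, eval_mem_closure e hmemA t⟩ := Subtype.ext ht
    have hv : v = ⟨s.eval e, eval_mem_closure e hmemA s⟩ := Subtype.ext hs
    rw [hu, hv] at huv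
    have h1 : (Aux19.subst r t).eval e = (Aux19.subst r s).eval e := by
      rw [← feval t, ← feval s, huv]
    have h2 := eval_inj _ _ h1
    have h3 := (Aux19.main_inj r.rank r le_rfl hr hocc).1 t s h2
    have h4 := Aux19.seq_eval e h3
    rw [hu, hv]
    exact Subtype.ext h4
  · -- surjectivity
    intro z
    have repr : ∀ w, mem_closure (insert c (Set.range fun i : ι => e (some i))) w →
        ∃ u : closure (Set.range e), (f u).1 = w := by
      intro w hw
      induction hw with
      | base h =>
        rcases Set.mem_insert_iff.mp h with rfl | ⟨i, rfl⟩
        · exact ⟨⟨e none, mem_closure.base ⟨none, rfl⟩⟩, by rw [hfb]⟩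
        · exact ⟨⟨e (some i), mem_closure.base ⟨some i, rfl⟩⟩, by rw [hfa]⟩
      | mul h1 h2 ih1 ih2 =>
        obtain ⟨u1, hu1⟩ := ih1
        obtain ⟨u2, hu2⟩ := ih2
        refine ⟨u1 * u2, ?_⟩
        rw [map_mul]
        show (f u1).1 * (f u2).1 = _
        rw [hu1, hu2]
    obtain ⟨u, hu⟩ := repr z.1 z.2
    exact ⟨u, Subtype.ext hu⟩
  · -- non-membership
    intro hmem
    have repr2 : ∀ w, mem_closure (insert c (Set.range fun i : ι => e (some i))) w →
        ∃ t : Term (Option ι), w = (Aux19.subst r t).eval e := by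
      intro w hw
      induction hw with
      | base h =>
        rcases Set.mem_insert_iff.mp h with rfl | ⟨i, rfl⟩
        · exact ⟨.var none, hc⟩
        · exact ⟨.var (some i), rfl⟩
      | mul h1 h2 ih1 ih2 =>
        obtain ⟨t1, rfl⟩ := ih1
        obtain ⟨t2, rfl⟩ := ih2
        exact ⟨.mul t1 t2, rfl⟩
    obtain ⟨t, ht⟩ := repr2 _ hmem
    have h1 : (Term.var (none : Option ι)).eval e = (Aux19.subst r t).eval e := ht
    exact (Aux19.main_inj r.rank r le_rfl hr hocc).2 t (eval_inj _ _ h1)
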